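/- Let a < 0, λ > 0, let X be continuous on (-∞, T] with X(t) > 0 for t ≤ 0, and let Y(t) = ∫_{-∞}^{t} λ e^{-λ(t-s)} X(s) ds (well-defined and finite) and Z(t) := X(t) + a Y(t). If Z(t) > 0 for all t ∈ [0,T], then X(t) > 0 for all t ∈ [0,T]. -/
import Mathlib


theorem no_first_zero (lam a T : ℝ) (hlam : lam > 0) (ha : a < 0)
    (X : ℝ → ℝ) (hXcont : Continuous X)
    (hXinit : ∀ t ≤ (0 : ℝ), X t > 0)
    (hint : ∀ t : ℝ, MeasureTheory.IntegrableOn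
      (fun s => lam * Real.exp (-lam * (t - s)) * X s) (Set.Iic t))
    (Y Z : ℝ → ℝ)
    (hY : ∀ t : ℝ, Y t = ∫ s in Set.Iic t, lam * Real.exp (-lam * (t - s)) * X s)
    (hZ : ∀ t : ℝ, Z t = X t + a * Y t)
    (hZpos : ∀ t ∈ Set.Icc (0 : ℝ) T, Z t > 0) :
    ∀ t ∈ Set.Icc (0 : ℝ) T, X t > 0 := by
  by_contra h
  push_neg at h
  obtain ⟨t0, ht0, hXt0⟩ := h
  set A : Set ℝ := {t ∈ Set.Icc (0 : ℝ) T | X t ≤ 0} with hA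
  have hAne : A.Nonempty := ⟨t0, ht0, hXt0⟩
  have hAbdd : BddBelow A := ⟨0, fun x hx => hx.1.1⟩
  have hAclosed : IsClosed A := by
    have : A = Set.Icc 0 T ∩ X ⁻¹' Set.Iic 0 := by
      ext x; simp [hA, Set.mem_setOf_eq, and_assoc]
    rw [this]
    exact isClosed_Icc.inter (isClosed_Iic.preimage hXcont)
  have ht' : sInf A ∈ A := hAclosed.csInf_mem hAne hAbdd
  set t' := sInf A with ht'def
  have ht'Icc : t' ∈ Set.Icc (0 : ℝ) T := ht'.1
  -- X s > 0 for all s ≤ t' with s < t', in fact for all s < t'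
  have hXpos : ∀ s < t', X s > 0 := by
    intro s hs
    rcases le_or_gt s 0 with hs0 | hs0
    · exact hXinit s hs0
    · by_contra hneg
      push_neg at hneg
      have : s ∈ A := ⟨⟨hs0.le, hs.le.trans ht'Icc.2⟩, hneg⟩
      exact absurd (csInf_le hAbdd this) (not_le.mpr hs)
  have hXt'eq : X t' = 0 := by
    refine le_antisymm ht'.2 ?_
    have htend : Filter.Tendsto X (nhdsWithin t' (Set.Iio t')) (nhds (X t')) :=
      (hXcont.tendsto t').mono_left nhdsWithin_le_nhds
    exact ge_of_tendsto htend
      (Filter.eventually_of_mem self_mem_nhdsWithin (fun x hx => (hXpos x hx).le))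
  -- the integrand is positive on Iio t', nonneg on Iic t'
  have hYpos : Y t' > 0 := by
    rw [hY, gt_iff_lt]
    have hnn : 0 ≤ᵐ[MeasureTheory.volume.restrict (Set.Iic t')]
        fun s => lam * Real.exp (-lam * (t' - s)) * X s := by
      refine (MeasureTheory.ae_restrict_iff' measurableSet_Iic).mpr ?_
      filter_upwards with s hs
      rcases lt_or_eq_of_le (Set.mem_Iic.mp hs) with h1 | h1
      · exact le_of_lt (mul_pos (mul_pos hlam (Real.exp_pos _)) (hXpos s h1))
      · rw [h1]
        simp [hXt'eq]
    rw [MeasureTheory.setIntegral_pos_iff_support_of_nonneg_ae hnn (hint t')]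
    have hsub : Set.Iio t' ⊆ Function.support (fun s => lam * Real.exp (-lam * (t' - s)) * X s) ∩ Set.Iic t' := by
      intro s hs
      refine ⟨?_, Set.mem_Iic.mpr (le_of_lt (Set.mem_Iio.mp hs))⟩
      exact ne_of_gt (mul_pos (mul_pos hlam (Real.exp_pos _)) (hXpos s (Set.mem_Iio.mp hs)))
    calc (0 : ENNReal) < MeasureTheory.volume (Set.Iio t') := by simp
      _ ≤ _ := MeasureTheory.measure_mono hsub
  have hZt' := hZpos t' ht'Icc
  rw [hZ] at hZt'
  have : X t' + a * Y t' ≤ 0 + a * Y t' := by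
    have := ht'.2; linarith
  have : a * Y t' < 0 := mul_neg_of_neg_of_pos ha hYpos
  linarith
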